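/- arXiv:hep-th/9712157 — 2 statements merged into one kernel-verified Lean document; each statement's English description precedes it below -/
import Mathlib

section
/- Let R be a commutative ring and x₁,…,xₙ a regular sequence in R. Then the Koszul complex K(x₁,…,xₙ) (the exterior algebra on degree-1 generators u*₁,…,u*ₙ with δ(u*ᵢ) = xᵢ extended as a derivation) is a resolution of R/(x₁,…,xₙ): H₀ ≅ R/(x₁,…,xₙ) and Hᵢ = 0 for i > 0. -/
/-!
Induction on the length of the sequence. Sorting the basis subsets of `{1,…,n+1}` by whether
they contain `n+1` identifies `K(x₁,…,x_{n+1})_{i+1}` with `K(x₁,…,xₙ)_{i+1} ⊕ K(x₁,…,xₙ)_i`, and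
the differential becomes `(a, b) ↦ (δa + (-1)^i x_{n+1} b, δb)`: the Koszul complex of the longer
sequence is the mapping cone of `x_{n+1}` on that of the shorter one, so δ² = 0 is inherited.
If `(a, b)` is a cycle, then `b` is a boundary `δc`: in positive degree because it is a cycle of
`K(x₁,…,xₙ)`, in degree 0 because `x_{n+1} b ∈ (x₁,…,xₙ)` and `x_{n+1}` is a non-zero-divisor
modulo that ideal. Then `a + (-1)^i x_{n+1} c` is a cycle, hence some `δd`, and `(a, b) = δ(d, c)`.
-/

/-- The degree-`i` part of the Koszul complex on `n` generators: the free module on the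
`i`-element subsets `S` of `{1,…,n}` (monomials `u*_{j₁} ∧ … ∧ u*_{jᵢ}` in the exterior
algebra on the degree-1 generators `u*₁, …, u*ₙ`). -/
abbrev KoszulPart (R : Type) [CommRing R] (n i : ℕ) : Type :=
  {S : Finset (Fin n) // S.card = i} → R

/-- The Koszul differential, the derivation determined by `δ(u*ⱼ) = xⱼ`:
`δ(u*_{j₁} ∧ … ∧ u*_{jᵢ}) = Σ_t (-1)^{t-1} x_{j_t} u*_{j₁} ∧ … ∧ û*_{j_t} ∧ … ∧ u*_{jᵢ}`,
written in terms of the coefficient functions on subsets. -/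
noncomputable def koszulD (R : Type) [CommRing R] (n : ℕ) (x : Fin n → R) (i : ℕ) :
    KoszulPart R n (i + 1) →ₗ[R] KoszulPart R n i where
  toFun f S := ∑ j : Fin n,
    if h : j ∈ S.1 then 0
    else ((-1 : R) ^ (S.1.filter (fun t => t < j)).card * x j) *
      f ⟨insert j S.1, by rw [Finset.card_insert_of_notMem h, S.2]⟩
  map_add' f g := by
    funext S
    simp only [Pi.add_apply, ← Finset.sum_add_distrib]
    refine Finset.sum_congr rfl fun j _ => ?_
    split
    · simp
    · simp [mul_add]
  map_smul' c f := by
    funext S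
    simp only [Pi.smul_apply, smul_eq_mul, RingHom.id_apply, Finset.mul_sum]
    refine Finset.sum_congr rfl fun j _ => ?_
    split
    · simp
    · ring

namespace Koszul

open Finset

variable {R : Type} [CommRing R] {n i : ℕ}

def IsWeaklyRegular (x : Fin n → R) : Prop :=
  ∀ i : Fin n, ∀ r : R,
    x i * r ∈ Ideal.span (x '' {j | j < i}) → r ∈ Ideal.span (x '' {j | j < i})

theorem IsWeaklyRegular.castSucc {x : Fin (n + 1) → R} (hx : IsWeaklyRegular x) :
    IsWeaklyRegular (x ∘ Fin.castSucc) := by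
  intro i r
  have hIio : Fin.castSucc '' {j | j < i} = {j | j < i.castSucc} := Fin.image_castSucc_Iio i
  rw [Set.image_comp, hIio]
  exact hx i.castSucc r

theorem IsWeaklyRegular.mem_span_of_last_mul_mem {x : Fin (n + 1) → R}
    (hx : IsWeaklyRegular x) {r : R}
    (hr : x (Fin.last n) * r ∈ Ideal.span (Set.range (x ∘ Fin.castSucc))) :
    r ∈ Ideal.span (Set.range (x ∘ Fin.castSucc)) := by
  have hrange : Set.range (x ∘ Fin.castSucc) = x '' {j | j < Fin.last n} := by
    rw [Set.range_comp, Fin.range_castSucc]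
    rfl
  rw [hrange] at hr ⊢
  exact hx _ r hr

theorem last_notMem_map_castSuccEmb (T : Finset (Fin n)) :
    Fin.last n ∉ T.map Fin.castSuccEmb := by
  simp [Fin.castSucc_ne_last]

def mapCastSucc (T : {T : Finset (Fin n) // #T = i}) : {S : Finset (Fin (n + 1)) // #S = i} :=
  ⟨T.1.map Fin.castSuccEmb, by rw [card_map, T.2]⟩

def insertLast (T : {T : Finset (Fin n) // #T = i}) :
    {S : Finset (Fin (n + 1)) // #S = i + 1} :=
  ⟨insert (Fin.last n) (T.1.map Fin.castSuccEmb), by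
    rw [card_insert_of_notMem (last_notMem_map_castSuccEmb _), card_map, T.2]⟩

noncomputable def castSuccPreimage (S : Finset (Fin (n + 1))) : Finset (Fin n) :=
  S.preimage Fin.castSuccEmb Fin.castSuccEmb.injective.injOn

theorem map_castSuccPreimage {S : Finset (Fin (n + 1))} (h : Fin.last n ∉ S) :
    (castSuccPreimage S).map Fin.castSuccEmb = S := by
  ext j
  induction j using Fin.lastCases with
  | last => simp [h, Fin.castSucc_ne_last]
  | cast k => simp [castSuccPreimage]

theorem insert_last_map_castSuccPreimage {S : Finset (Fin (n + 1))} (h : Fin.last n ∈ S) :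
    insert (Fin.last n) ((castSuccPreimage S).map Fin.castSuccEmb) = S := by
  ext j
  induction j using Fin.lastCases with
  | last => simp [h]
  | cast k => simp [castSuccPreimage, Fin.castSucc_ne_last]

theorem castSuccPreimage_map (T : Finset (Fin n)) :
    castSuccPreimage (T.map Fin.castSuccEmb) = T :=
  preimage_map _ _

theorem castSuccPreimage_insert_last_map (T : Finset (Fin n)) :
    castSuccPreimage (insert (Fin.last n) (T.map Fin.castSuccEmb)) = T := by
  ext k
  simp [castSuccPreimage, Fin.castSucc_ne_last]

theorem card_castSuccPreimage_of_notMem {S : Finset (Fin (n + 1))} (h : Fin.last n ∉ S) :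
    #(castSuccPreimage S) = #S := by
  rw [← card_map Fin.castSuccEmb, map_castSuccPreimage h]

theorem card_castSuccPreimage_of_mem {S : Finset (Fin (n + 1))} (h : Fin.last n ∈ S) :
    #(castSuccPreimage S) + 1 = #S := by
  conv_rhs => rw [← insert_last_map_castSuccPreimage h]
  rw [card_insert_of_notMem (last_notMem_map_castSuccEmb _), card_map]

theorem exists_mapCastSucc_eq (S : {S : Finset (Fin (n + 1)) // #S = i})
    (h : Fin.last n ∉ S.1) : ∃ T, mapCastSucc T = S :=
  ⟨⟨castSuccPreimage S.1, (card_castSuccPreimage_of_notMem h).trans S.2⟩,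
    Subtype.ext (map_castSuccPreimage h)⟩

theorem exists_insertLast_eq (S : {S : Finset (Fin (n + 1)) // #S = i + 1})
    (h : Fin.last n ∈ S.1) : ∃ T, insertLast T = S := by
  refine ⟨⟨castSuccPreimage S.1, ?_⟩, Subtype.ext (insert_last_map_castSuccPreimage h)⟩
  have := card_castSuccPreimage_of_mem h
  omega

instance {α : Type*} : Subsingleton {S : Finset α // #S = 0} :=
  ⟨fun S T => Subtype.ext (by rw [card_eq_zero.mp S.2, card_eq_zero.mp T.2])⟩

instance : IsEmpty {S : Finset (Fin 0) // #S = i + 1} :=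
  ⟨fun S => by simpa [S.2] using S.1.card_le_univ⟩

theorem ext_of_comp_mapCastSucc_of_comp_insertLast {f g : KoszulPart R (n + 1) (i + 1)}
    (h₁ : f ∘ mapCastSucc = g ∘ mapCastSucc) (h₂ : f ∘ insertLast = g ∘ insertLast) :
    f = g := by
  funext S
  by_cases h : Fin.last n ∈ S.1
  · obtain ⟨T, rfl⟩ := exists_insertLast_eq S h
    exact congrFun h₂ T
  · obtain ⟨T, rfl⟩ := exists_mapCastSucc_eq S h
    exact congrFun h₁ T

theorem ext_of_comp_mapCastSucc {f g : KoszulPart R (n + 1) 0}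
    (h : f ∘ mapCastSucc = g ∘ mapCastSucc) : f = g := by
  funext S
  rw [Subsingleton.elim S (mapCastSucc ⟨∅, card_empty⟩)]
  exact congrFun h _

noncomputable def glue (a : KoszulPart R n (i + 1)) (b : KoszulPart R n i) :
    KoszulPart R (n + 1) (i + 1) := fun S =>
  if h : Fin.last n ∈ S.1 then
    b ⟨castSuccPreimage S.1, by have := card_castSuccPreimage_of_mem h; omega⟩
  else a ⟨castSuccPreimage S.1, (card_castSuccPreimage_of_notMem h).trans S.2⟩

theorem glue_comp_mapCastSucc (a : KoszulPart R n (i + 1)) (b : KoszulPart R n i) :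
    glue a b ∘ mapCastSucc = a := by
  funext T
  simp [glue, mapCastSucc, castSuccPreimage_map]

theorem glue_comp_insertLast (a : KoszulPart R n (i + 1)) (b : KoszulPart R n i) :
    glue a b ∘ insertLast = b := by
  funext T
  simp [glue, insertLast, castSuccPreimage_insert_last_map]

theorem card_filter_lt_castSucc_map (T : Finset (Fin n)) (k : Fin n) :
    #{t ∈ T.map Fin.castSuccEmb | t < k.castSucc} = #{t ∈ T | t < k} := by
  rw [filter_map, card_map]
  simp [Function.comp_def]

theorem koszulD_apply {x : Fin n → R} (f : KoszulPart R n (i + 1))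
    (S : {S : Finset (Fin n) // #S = i}) :
    koszulD R n x i f S = ∑ j : Fin n,
      if h : j ∈ S.1 then 0
      else ((-1 : R) ^ #{t ∈ S.1 | t < j} * x j) *
        f ⟨insert j S.1, by rw [card_insert_of_notMem h, S.2]⟩ := rfl

theorem koszulD_comp_mapCastSucc (x : Fin (n + 1) → R) (f : KoszulPart R (n + 1) (i + 1)) :
    koszulD R (n + 1) x i f ∘ mapCastSucc =
      koszulD R n (x ∘ Fin.castSucc) i (f ∘ mapCastSucc) +
        ((-1 : R) ^ i * x (Fin.last n)) • (f ∘ insertLast) := by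
  funext T
  simp only [Function.comp_apply, koszulD_apply, Pi.add_apply, Pi.smul_apply, smul_eq_mul]
  rw [Fin.sum_univ_castSucc]
  congr 1
  · refine sum_congr rfl fun k _ => ?_
    simp [mapCastSucc, card_filter_lt_castSucc_map]
  · have hlt : ∀ t ∈ T.1.map Fin.castSuccEmb, t < Fin.last n := by
      simp [Fin.castSucc_lt_last]
    simp only [mapCastSucc, dif_neg (last_notMem_map_castSuccEmb _), filter_true_of_mem hlt,
      card_map, T.2]
    rfl

theorem koszulD_comp_insertLast (x : Fin (n + 1) → R) (f : KoszulPart R (n + 1) (i + 2)) :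
    koszulD R (n + 1) x (i + 1) f ∘ insertLast =
      koszulD R n (x ∘ Fin.castSucc) i (f ∘ insertLast) := by
  funext T
  simp only [Function.comp_apply, koszulD_apply, insertLast]
  rw [Fin.sum_univ_castSucc, dif_pos (mem_insert_self _ _), add_zero]
  refine sum_congr rfl fun k _ => ?_
  have hk : ¬ Fin.last n < k.castSucc := (Fin.castSucc_lt_last k).asymm
  simp [filter_insert, hk, card_filter_lt_castSucc_map, Fin.castSucc_ne_last, insert_comm]

theorem eq_zero_of_fin_zero (f : KoszulPart R 0 (i + 1)) : f = 0 :=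
  funext isEmptyElim

theorem koszulD_koszulD (x : Fin n → R) (i : ℕ) (f : KoszulPart R n (i + 2)) :
    koszulD R n x i (koszulD R n x (i + 1) f) = 0 := by
  induction n generalizing i with
  | zero => rw [eq_zero_of_fin_zero f, map_zero, map_zero]
  | succ n ih =>
    have hcast : koszulD R (n + 1) x i (koszulD R (n + 1) x (i + 1) f) ∘ mapCastSucc = 0 := by
      rw [koszulD_comp_mapCastSucc, koszulD_comp_mapCastSucc, koszulD_comp_insertLast, map_add,
        map_smul, ih, zero_add, ← add_smul,
        show (-1 : R) ^ (i + 1) * x (Fin.last n) + (-1) ^ i * x (Fin.last n) = 0 by ring,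
        zero_smul]
    cases i with
    | zero => exact ext_of_comp_mapCastSucc hcast
    | succ i =>
      refine ext_of_comp_mapCastSucc_of_comp_insertLast hcast ?_
      rw [koszulD_comp_insertLast, koszulD_comp_insertLast, ih]
      rfl

theorem koszulD_zero_apply_empty (x : Fin n → R) (c : KoszulPart R n 1) :
    koszulD R n x 0 c ⟨∅, card_empty⟩ = ∑ j, x j * c ⟨{j}, card_singleton j⟩ := by
  simp [koszulD_apply]

theorem mem_span_range_iff_exists_koszulD_zero (x : Fin n → R) (r : R) :
    r ∈ Ideal.span (Set.range x) ↔ ∃ c, koszulD R n x 0 c ⟨∅, card_empty⟩ = r := by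
  simp only [koszulD_zero_apply_empty]
  refine (Submodule.mem_span_range_iff_exists_fun R).trans ⟨?_, ?_⟩
  · rintro ⟨a, rfl⟩
    exact ⟨fun S => ∑ k ∈ S.1, a k, by simp [mul_comm]⟩
  · rintro ⟨c, rfl⟩
    exact ⟨fun j => c ⟨{j}, card_singleton j⟩, by simp [mul_comm]⟩

theorem exists_koszulD_eq_of_comp_insertLast_eq {x : Fin (n + 1) → R}
    (hexact : ∀ a : KoszulPart R n (i + 1), koszulD R n (x ∘ Fin.castSucc) i a = 0 →
      ∃ d, koszulD R n (x ∘ Fin.castSucc) (i + 1) d = a)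
    {f : KoszulPart R (n + 1) (i + 1)} (hf : koszulD R (n + 1) x i f = 0)
    (hboundary : ∃ c, koszulD R n (x ∘ Fin.castSucc) i c = f ∘ insertLast) :
    ∃ g, koszulD R (n + 1) x (i + 1) g = f := by
  obtain ⟨c, hc⟩ := hboundary
  have hcycle : koszulD R n (x ∘ Fin.castSucc) i
      (f ∘ mapCastSucc + ((-1 : R) ^ i * x (Fin.last n)) • c) = 0 := by
    rw [map_add, map_smul, hc, ← koszulD_comp_mapCastSucc, hf]
    rfl
  obtain ⟨d, hd⟩ := hexact _ hcycle
  refine ⟨glue d c, ext_of_comp_mapCastSucc_of_comp_insertLast ?_ ?_⟩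
  · rw [koszulD_comp_mapCastSucc, glue_comp_mapCastSucc, glue_comp_insertLast, hd]
    funext T
    simp only [Pi.add_apply, Pi.smul_apply, smul_eq_mul, Function.comp_apply]
    ring
  · rw [koszulD_comp_insertLast, glue_comp_insertLast, hc]

theorem IsWeaklyRegular.exists_koszulD_zero_eq_comp_insertLast {x : Fin (n + 1) → R}
    (hx : IsWeaklyRegular x) {f : KoszulPart R (n + 1) 1} (hf : koszulD R (n + 1) x 0 f = 0) :
    ∃ c, koszulD R n (x ∘ Fin.castSucc) 0 c = f ∘ insertLast := by
  have hmem : x (Fin.last n) * f (insertLast ⟨∅, card_empty⟩) ∈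
      Ideal.span (Set.range (x ∘ Fin.castSucc)) := by
    have h := congrFun (koszulD_comp_mapCastSucc x f) ⟨∅, card_empty⟩
    simp only [hf, Function.comp_apply, Pi.zero_apply, Pi.add_apply, Pi.smul_apply,
      smul_eq_mul, pow_zero, one_mul] at h
    rw [eq_neg_of_add_eq_zero_right h.symm]
    exact neg_mem ((mem_span_range_iff_exists_koszulD_zero _ _).mpr ⟨_, rfl⟩)
  obtain ⟨c, hc⟩ :=
    (mem_span_range_iff_exists_koszulD_zero _ _).mp (hx.mem_span_of_last_mul_mem hmem)
  exact ⟨c, funext fun S => by rw [Subsingleton.elim S ⟨∅, card_empty⟩]; exact hc⟩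

theorem koszulD_exact {x : Fin n → R} (hx : IsWeaklyRegular x)
    {f : KoszulPart R n (i + 1)} (hf : koszulD R n x i f = 0) :
    ∃ g, koszulD R n x (i + 1) g = f := by
  induction n generalizing i with
  | zero => exact ⟨0, by rw [map_zero, eq_zero_of_fin_zero f]⟩
  | succ n ih =>
    refine exists_koszulD_eq_of_comp_insertLast_eq (fun a ha => ih hx.castSucc ha) hf ?_
    cases i with
    | zero => exact hx.exists_koszulD_zero_eq_comp_insertLast hf
    | succ i =>
      refine ih hx.castSucc ?_
      rw [← koszulD_comp_insertLast, hf]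
      rfl

end Koszul

theorem stmt_13_general (R : Type) [CommRing R] (n : ℕ) (x : Fin n → R)
    -- regular sequence: xᵢ is a non-zero-divisor modulo (x₁,…,x_{i-1}) …
    (hreg : ∀ i : Fin n, ∀ r : R,
      x i * r ∈ Ideal.span (x '' {j : Fin n | j < i}) →
        r ∈ Ideal.span (x '' {j : Fin n | j < i})) :
    -- K(x) is a complex: δ² = 0
    (∀ i : ℕ, (koszulD R n x i) ∘ₗ (koszulD R n x (i + 1)) = 0) ∧
    -- Hᵢ = 0 for i > 0: exactness at each positive degree
    (∀ i : ℕ, LinearMap.ker (koszulD R n x i) ≤ LinearMap.range (koszulD R n x (i + 1))) ∧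
    -- H₀ ≅ R/(x₁,…,xₙ): under evaluation at the empty subset, the image of δ in degree 0
    -- is exactly the ideal (x₁,…,xₙ)
    Submodule.map
      (LinearMap.proj (R := R) (φ := fun _ : {S : Finset (Fin n) // S.card = 0} => R)
        ⟨∅, Finset.card_empty⟩)
      (LinearMap.range (koszulD R n x 0)) = (Ideal.span (Set.range x) : Ideal R) := by
  refine ⟨fun i => LinearMap.ext (Koszul.koszulD_koszulD x i),
    fun i f hf => Koszul.koszulD_exact hreg (LinearMap.mem_ker.mp hf), ?_⟩
  ext r
  rw [Koszul.mem_span_range_iff_exists_koszulD_zero]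
  simp

/-- Let `x₁,…,xₙ` be a regular sequence in the commutative ring `R`.
Then the Koszul complex `K(x₁,…,xₙ)` (the exterior algebra on degree-1 generators `u*ᵢ`
with `δ(u*ᵢ) = xᵢ` extended as a derivation) is a resolution of `R/(x₁,…,xₙ)`: it is a
complex, its homology vanishes in positive degrees (`Hᵢ = 0` for `i > 0`), and
`H₀ ≅ R/(x₁,…,xₙ)` (under the canonical identification of the degree-0 part with `R`,
the image of `δ` is the ideal `(x₁,…,xₙ)`). -/
theorem stmt_13 (R : Type) [CommRing R] (n : ℕ) (x : Fin n → R)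
    -- regular sequence: xᵢ is a non-zero-divisor modulo (x₁,…,x_{i-1}) …
    (hreg : ∀ i : Fin n, ∀ r : R,
      x i * r ∈ Ideal.span (x '' {j : Fin n | j < i}) →
        r ∈ Ideal.span (x '' {j : Fin n | j < i}))
    -- … and the ideal is proper
    (hproper : Ideal.span (Set.range x) ≠ ⊤) :
    -- K(x) is a complex: δ² = 0
    (∀ i : ℕ, (koszulD R n x i) ∘ₗ (koszulD R n x (i + 1)) = 0) ∧
    -- Hᵢ = 0 for i > 0: exactness at each positive degree
    (∀ i : ℕ, LinearMap.ker (koszulD R n x i) ≤ LinearMap.range (koszulD R n x (i + 1))) ∧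
    -- H₀ ≅ R/(x₁,…,xₙ): under evaluation at the empty subset, the image of δ in degree 0
    -- is exactly the ideal (x₁,…,xₙ)
    Submodule.map
      (LinearMap.proj (R := R) (φ := fun _ : {S : Finset (Fin n) // S.card = 0} => R)
        ⟨∅, Finset.card_empty⟩)
      (LinearMap.range (koszulD R n x 0)) = (Ideal.span (Set.range x) : Ideal R) :=
  stmt_13_general R n x hreg
end

section
/- In a differential graded Lie algebra (V, d, [,]) over a field of characteristic zero, the homology H(V) carries an induced graded Lie bracket, and if x, y, z are cycles with [x,y] = da and [y,z] = db, then the element [a,z] ± [x,b] (with appropriate Koszul signs) is a cycle whose homology class — the Massey-Lie triple bracket ⟨x,y,z⟩ — is well-defined modulo the ideal generated by the classes of x and z. -/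
/-- The sign `(-1)^n` for an integer `n`. -/
def sg (n : ℤ) : ℤ := if Even n then 1 else -1

lemma sg_sq (n : ℤ) : sg n * sg n = 1 := by
  unfold sg; split <;> norm_num

/-- In a dg Lie algebra over ℚ, the homology carries an induced bracket
(the bracket of cycles is a cycle, and the bracket of a cycle with a boundary is a
boundary), and if `x, y, z` are cycles with `[x,y] = da`, `[y,z] = db` (and the pairwise
product `[x,z]` vanishing, as required for the Massey–Lie triple product), then the
element `[a,z] - (-1)^{|x|}[x,b]` is a cycle, well defined — for any other choices
`a', b'` — modulo boundaries and the ideal generated by the classes of `x` and `z`. -/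
theorem stmt_17 (V : Type) [AddCommGroup V] [Module ℚ V]
    (𝒱 : ℤ → Submodule ℚ V)
    (br : V →ₗ[ℚ] V →ₗ[ℚ] V)
    (hbdeg : ∀ i j : ℤ, ∀ a ∈ 𝒱 i, ∀ b ∈ 𝒱 j, br a b ∈ 𝒱 (i + j))
    (hanti : ∀ i j : ℤ, ∀ a ∈ 𝒱 i, ∀ b ∈ 𝒱 j, br a b = - (sg (i * j) • br b a))
    (hjac : ∀ i j : ℤ, ∀ a ∈ 𝒱 i, ∀ b ∈ 𝒱 j, ∀ c : V,
      br a (br b c) = br (br a b) c + sg (i * j) • br b (br a c))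
    (d : V →ₗ[ℚ] V)
    (hddeg : ∀ i : ℤ, ∀ a ∈ 𝒱 i, d a ∈ 𝒱 (i - 1))
    (hd2 : ∀ x : V, d (d x) = 0)
    (hder : ∀ i : ℤ, ∀ a ∈ 𝒱 i, ∀ b : V, d (br a b) = br (d a) b + sg i • br a (d b))
    (i j k : ℤ) (x y z : V) (hx : x ∈ 𝒱 i) (hy : y ∈ 𝒱 j) (hz : z ∈ 𝒱 k)
    (hdx : d x = 0) (hdy : d y = 0) (hdz : d z = 0)
    (hxz : br x z = 0)
    (a b : V) (ha : a ∈ 𝒱 (i + j + 1)) (hb : b ∈ 𝒱 (j + k + 1))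
    (hda : d a = br x y) (hdb : d b = br y z) :
    -- the bracket of two cycles is a cycle
    (∀ p q : ℤ, ∀ u ∈ 𝒱 p, ∀ w ∈ 𝒱 q, d u = 0 → d w = 0 → d (br u w) = 0) ∧
    -- the bracket of a cycle with a boundary is a boundary (the induced bracket on
    -- homology is well defined)
    (∀ p : ℤ, ∀ u ∈ 𝒱 p, d u = 0 → ∀ w : V, ∃ e : V, br u (d w) = d e) ∧
    -- the defining representative of the Massey–Lie triple bracket ⟨x,y,z⟩ is a cycle
    d (br a z - sg i • br x b) = 0 ∧
    -- indeterminacy: changing the bounding elements a, b changes the representative by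
    -- a boundary plus elements of the form [x, cycle] + [cycle, z]
    (∀ a' b' : V, a' ∈ 𝒱 (i + j + 1) → b' ∈ 𝒱 (j + k + 1) →
      d a' = br x y → d b' = br y z →
      ∃ u w₁ w₂ : V, d w₁ = 0 ∧ d w₂ = 0 ∧
        (br a z - sg i • br x b) - (br a' z - sg i • br x b')
          = d u + br x w₁ + br w₂ z) := by
  refine ⟨?_, ?_, ?_, ?_⟩
  · intro p q u hu w hw hdu hdw
    rw [hder p u hu w, hdu, hdw]
    simp
  · intro p u hu hdu w
    refine ⟨sg p • br u w, ?_⟩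
    rw [map_zsmul, hder p u hu w, hdu, smul_add, smul_smul, sg_sq]
    simp
  · have h1 := hder (i + j + 1) a ha z
    have h2 := hder i x hx b
    rw [map_sub, map_zsmul, h1, h2, hda, hdz, hdx, hdb]
    have hj := hjac i j x hx y hy z
    have : br x (br y z) = br (br x y) z := by
      rw [hj]
      have hjac2 := hjac i k x hx z hz
      have : br y (br x z) = 0 := by rw [hxz]; simp
      rw [this]; simp
    simp only [map_zero, LinearMap.zero_apply, zero_add, add_zero, smul_zero]
    rw [smul_smul, sg_sq, one_smul, this, sub_self]
  · intro a' b' ha' hb' hda' hdb'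
    refine ⟨0, -sg i • (b - b'), a - a', ?_, ?_, ?_⟩
    · rw [map_zsmul, map_sub, hdb, hdb']; simp
    · rw [map_sub, hda, hda']; simp
    · simp only [map_zero, map_sub, map_zsmul, map_neg, neg_smul, smul_neg, smul_sub,
        LinearMap.sub_apply, LinearMap.add_apply, LinearMap.smul_apply]
      abel
end
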